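/- Let c(α) := ∫₀¹ erf(√(α/(8t))) dt for α > 0. Then lim_{α → 0⁺} c(α)/√α = √(2/π); that is, c(α) ∼ √(2α/π) as α → 0⁺. -/

import Mathlib

/-!
Write `√(α/(8t)) = √α · s(t)` with `s(t) = (8t)^{-1/2}`. Since `erf y / y → 2/√π` as `y → 0⁺`
and `|erf y| ≤ (2/√π)|y|`, dominated convergence (with dominating function `(2/√π) s`) gives
`c(α)/√α → (2/√π) ∫₀¹ s = (2/√π)(2/√8) = √(2/π)`.
-/

open MeasureTheory Filter

/-- The error function `erf x = (2/√π) ∫_0^x e^{-s²} ds`. -/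
noncomputable def erf (x : ℝ) : ℝ :=
  (2 / Real.sqrt Real.pi) * ∫ s in (0:ℝ)..x, Real.exp (-s ^ 2)

/-- `c(α) = ∫_0^1 erf(√(α/(8t))) dt`. -/
noncomputable def cFun (α : ℝ) : ℝ :=
  ∫ t in (0:ℝ)..1, erf (Real.sqrt (α / (8 * t)))

open Real Set Topology

theorem hasDerivAt_erf (x : ℝ) : HasDerivAt erf (2 / √π * exp (-x ^ 2)) x := by
  have hc : Continuous fun s : ℝ => exp (-s ^ 2) := by fun_prop
  exact (intervalIntegral.integral_hasDerivAt_right (hc.intervalIntegrable 0 x)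
    (hc.stronglyMeasurableAtFilter _ _) hc.continuousAt).const_mul _

theorem continuous_erf : Continuous erf :=
  continuous_iff_continuousAt.2 fun x => (hasDerivAt_erf x).continuousAt

theorem tendsto_erf_div_self : Tendsto (fun x => erf x / x) (𝓝[>] 0) (𝓝 (2 / √π)) := by
  simpa [erf, div_eq_inv_mul] using (hasDerivAt_erf 0).tendsto_slope_zero_right

theorem abs_erf_le (x : ℝ) : |erf x| ≤ 2 / √π * |x| := by
  have h : ‖∫ s in (0:ℝ)..x, exp (-s ^ 2)‖ ≤ 1 * |x - 0| :=
    intervalIntegral.norm_integral_le_of_norm_le_const fun s _ => by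
      rw [norm_of_nonneg (exp_pos _).le]
      exact exp_le_one_iff.2 (by nlinarith)
  rw [erf, abs_mul, abs_of_pos (by positivity)]
  simpa using mul_le_mul_of_nonneg_left h (by positivity : (0:ℝ) ≤ 2 / √π)

theorem tendsto_integral_comp_mul_div {X : Type*} [MeasurableSpace X] {μ : Measure X}
    {φ : ℝ → ℝ} {s : X → ℝ} {C L : ℝ} (hφ : Measurable φ)
    (hφ_le : ∀ y, 0 ≤ y → |φ y| ≤ C * y) (hφ_lim : Tendsto (fun y => φ y / y) (𝓝[>] 0) (𝓝 L))
    (hs : Integrable s μ) (hs_nonneg : ∀ᵐ x ∂μ, 0 ≤ s x) :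
    Tendsto (fun ε => (∫ x, φ (ε * s x) ∂μ) / ε) (𝓝[>] 0) (𝓝 (L * ∫ x, s x ∂μ)) := by
  simp_rw [← integral_div, ← integral_const_mul]
  refine tendsto_integral_filter_of_dominated_convergence (fun x => C * s x) ?_ ?_
    (hs.const_mul C) ?_
  · exact Eventually.of_forall fun ε =>
      ((hφ.comp_aemeasurable (hs.aemeasurable.const_mul ε)).div_const ε).aestronglyMeasurable
  · filter_upwards [self_mem_nhdsWithin] with ε (hε : 0 < ε)
    filter_upwards [hs_nonneg] with x hx
    rw [norm_div, norm_of_nonneg hε.le, div_le_iff₀ hε, Real.norm_eq_abs]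
    linarith [hφ_le _ (mul_nonneg hε.le hx)]
  · filter_upwards [hs_nonneg] with x hx
    rcases hx.eq_or_lt with hx | hx
    · have hφ0 : φ 0 = 0 := abs_nonpos_iff.1 (by simpa using hφ_le 0 le_rfl)
      simp [← hx, hφ0]
    · have hmul : Tendsto (fun ε => ε * s x) (𝓝[>] 0) (𝓝[>] 0) := by
        simpa only [mul_comm] using tendsto_iff_comap.2 (comap_mulLeft_nhdsGT_zero hx).ge
      refine ((hφ_lim.comp hmul).mul_const (s x)).congr' ?_
      filter_upwards [self_mem_nhdsWithin] with ε (hε : 0 < ε)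
      simp only [Function.comp_apply]
      field_simp

theorem sqrt_inv_mul_eq_rpow {k t : ℝ} (hk : 0 ≤ k) (ht : 0 ≤ t) :
    √((k * t)⁻¹) = (√k)⁻¹ * t ^ (-(1 / 2) : ℝ) := by
  rw [mul_inv, sqrt_mul (inv_nonneg.2 hk), sqrt_inv, sqrt_inv, rpow_neg ht, ← sqrt_eq_rpow]

theorem intervalIntegrable_sqrt_inv_mul {k : ℝ} (hk : 0 ≤ k) :
    IntervalIntegrable (fun t => √((k * t)⁻¹)) volume 0 1 := by
  refine ((intervalIntegral.intervalIntegrable_rpow' (r := -(1 / 2)) (by norm_num)).const_mul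
    (√k)⁻¹).congr fun t ht => (sqrt_inv_mul_eq_rpow hk (le_of_lt (by simpa using ht.1))).symm

theorem integral_sqrt_inv_mul {k : ℝ} (hk : 0 ≤ k) :
    ∫ t in (0:ℝ)..1, √((k * t)⁻¹) = 2 / √k := by
  rw [intervalIntegral.integral_congr (g := fun t => (√k)⁻¹ * t ^ (-(1 / 2) : ℝ))
    fun t ht => sqrt_inv_mul_eq_rpow hk (by simpa using ht.1),
    intervalIntegral.integral_const_mul, integral_rpow (by norm_num)]
  norm_num
  ring

theorem tendsto_sqrt_nhdsGT_zero : Tendsto sqrt (𝓝[>] 0) (𝓝[>] 0) :=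
  tendsto_nhdsWithin_iff.2
    ⟨(continuous_sqrt.tendsto' 0 0 sqrt_zero).mono_left nhdsWithin_le_nhds,
      eventually_nhdsWithin_of_forall fun _ hx => sqrt_pos.2 hx⟩

/-- `c(α) ~ √(2α/π)` as `α → 0⁺`, i.e. `c(α)/√α → √(2/π)`. -/
theorem cFun_asymp_zero :
    Tendsto (fun α : ℝ => cFun α / Real.sqrt α) (nhdsWithin 0 (Set.Ioi 0))
      (nhds (Real.sqrt (2 / Real.pi))) := by
  have hlim := (tendsto_integral_comp_mul_div (μ := volume.restrict (Ioc 0 1))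
    continuous_erf.measurable (fun y hy => (abs_erf_le y).trans_eq (by rw [abs_of_nonneg hy]))
    tendsto_erf_div_self (intervalIntegrable_sqrt_inv_mul (k := 8) (by norm_num)).1
    (Eventually.of_forall fun _ => sqrt_nonneg _)).comp tendsto_sqrt_nhdsGT_zero
  have hconst : 2 / √π * (2 / √8) = √(2 / π) := by
    have h8 : √8 = 2 * √2 := by
      rw [show (8:ℝ) = 2 ^ 2 * 2 by norm_num, sqrt_mul (by norm_num), sqrt_sq (by norm_num)]
    have h2 : √2 * √2 = 2 := mul_self_sqrt (by norm_num)
    rw [h8, sqrt_div (by norm_num)]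
    field_simp
    linarith
  rw [← intervalIntegral.integral_of_le zero_le_one, integral_sqrt_inv_mul (by norm_num),
    hconst] at hlim
  refine hlim.congr' (eventually_nhdsWithin_of_forall fun α (hα : 0 < α) => ?_)
  simp only [Function.comp_apply, cFun, intervalIntegral.integral_of_le zero_le_one, div_eq_mul_inv,
    sqrt_mul hα.le]
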